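/- Let X and Y be words over {+,-,*} with the same '-reduction, i.e. X' = Y' = c₁⋯c_r where W' denotes the word obtained from W by deleting all occurrences of *. Write X = *^{x₀} c₁ *^{x₁} c₂ ⋯ c_r *^{x_r} and Y = *^{y₀} c₁ *^{y₁} c₂ ⋯ c_r *^{y_r}. Then X ≥ Y if and only if x_i ≥ y_i for all 0 ≤ i ≤ r. -/
import Mathlib


inductive Symb : Type
  | plus | minus | star
deriving DecidableEq


/-- the dual of a symbol: `+` ↦ `-`, `-` ↦ `+`, `*` ↦ `*` -/
def dualSym : Symb → Symb
  | Symb.plus => Symb.minus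
  | Symb.minus => Symb.plus
  | Symb.star => Symb.star

/-- the dual (involution) of a word: reverse and dualize each symbol -/
def dualWord (W : List Symb) : List Symb := (W.map dualSym).reverse

/-- the arc relation of the reflexive path `P(W)` on vertices `{0,…,|W|}` -/
def pathArc (W : List Symb) (i j : ℕ) : Prop :=
  i ≤ W.length ∧ j ≤ W.length ∧
    (i = j ∨ (j = i + 1 ∧ (W[i]? = some Symb.plus ∨ W[i]? = some Symb.star))
           ∨ (i = j + 1 ∧ (W[j]? = some Symb.minus ∨ W[j]? = some Symb.star)))

/-- `f` is an end-point preserving homomorphism from the path `P(V)` onto the path `P(U)` -/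
def EPHom (V U : List Symb) (f : ℕ → ℕ) : Prop :=
  f 0 = 0 ∧ f V.length = U.length ∧
  (∀ i j, pathArc V i j → pathArc U (f i) (f j)) ∧
  (∀ m, m ≤ U.length → ∃ i, i ≤ V.length ∧ f i = m)

/-- the order on words: `U ≤ V` iff there is an end-point preserving
homomorphism from `P(V)` onto `P(U)` -/
def wle (U V : List Symb) : Prop := ∃ f, EPHom V U f

/-- interleave blocks of stars with the symbols of `c`:
`build (x₀ :: x₁ :: ⋯ :: x_r :: []) (c₁ :: ⋯ :: c_r :: [])`
is the word `*^{x₀} c₁ *^{x₁} c₂ ⋯ c_r *^{x_r}`. -/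
def build : List ℕ → List Symb → List Symb
  | [], _ => []
  | x :: _, [] => List.replicate x Symb.star
  | x :: xs, c :: cs => List.replicate x Symb.star ++ c :: build xs cs


/-- position of the start of the `k`-th star block -/
def s7A (x : List ℕ) (k : ℕ) : ℕ := (x.take k).sum + k

lemma s7A_zero (x : List ℕ) : s7A x 0 = 0 := by simp [s7A]

lemma s7A_cons (a : ℕ) (xs : List ℕ) (k : ℕ) :
    s7A (a :: xs) (k+1) = a + 1 + s7A xs k := by
  simp [s7A]; omega

lemma s7A_succ (x : List ℕ) (k : ℕ) (h : k < x.length) :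
    s7A x (k+1) = s7A x k + x.getD k 0 + 1 := by
  have := List.sum_take_succ x k h
  simp only [s7A, this, List.getD_eq_getElem x 0 h, List.get_eq_getElem]
  omega

lemma s7A_mono (x : List ℕ) {j k : ℕ} (h : j ≤ k) : s7A x j ≤ s7A x k := by
  induction k with
  | zero => have : j = 0 := Nat.le_zero.mp h; simp [this]
  | succ k ih =>
    rcases Nat.lt_or_ge j (k+1) with h' | h'
    · refine le_trans (ih (by omega)) ?_
      simp only [s7A]
      have : (x.take k).sum ≤ (x.take (k+1)).sum := by
        rcases Nat.lt_or_ge k x.length with hk | hk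
        · rw [List.sum_take_succ x k hk]; omega
        · rw [List.take_of_length_le hk, List.take_of_length_le (by omega)]
      omega
    · have : j = k + 1 := by omega
      exact this ▸ le_refl _

lemma s7A_block_lt (x : List ℕ) {j k : ℕ} (hj : j < x.length) (h : j < k) :
    s7A x j + x.getD j 0 < s7A x k := by
  have h1 := s7A_succ x j hj
  have h2 := s7A_mono x (show j + 1 ≤ k by omega)
  omega

lemma build_length (x : List ℕ) (cl : List Symb) (h : x.length = cl.length + 1) :
    (build x cl).length = x.sum + cl.length := by
  induction cl generalizing x with
  | nil =>
    match x, h with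
    | [a], _ => simp [build]
  | cons d cs ih =>
    match x, h with
    | a :: xs, h =>
      simp only [build, List.length_append, List.length_replicate, List.length_cons,
        ih xs (by simpa using h)]
      simp [List.sum_cons]; omega

lemma build_top (x : List ℕ) (cl : List Symb) (h : x.length = cl.length + 1) :
    s7A x cl.length + x.getD cl.length 0 = x.sum + cl.length := by
  have h1 := List.sum_take_succ x cl.length (by omega)
  have h2 : x.take (cl.length + 1) = x := List.take_of_length_le (by omega)
  rw [h2] at h1
  simp only [s7A, List.getD_eq_getElem x 0 (show cl.length < x.length by omega),
    List.get_eq_getElem] at *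
  omega

lemma build_get_star (x : List ℕ) (cl : List Symb) (h : x.length = cl.length + 1)
    {k t : ℕ} (hk : k ≤ cl.length) (ht : t < x.getD k 0) :
    (build x cl)[s7A x k + t]? = some Symb.star := by
  induction k generalizing x cl with
  | zero =>
    match x, h with
    | a :: xs, h =>
      have ht' : t < a := by simpa using ht
      rw [s7A_zero]
      match cl with
      | [] => simp [build, List.getElem?_replicate, ht']
      | d :: cs =>
        simp [build, List.getElem?_append, List.getElem?_replicate, ht']
  | succ k ih =>
    match cl, hk with
    | d :: cs, hk =>
      match x, h with
      | a :: xs, h =>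
        simp only [build, s7A_cons]
        rw [show a + 1 + s7A xs k + t = a + (s7A xs k + t + 1) from by omega,
          List.getElem?_append_right (by simp)]
        rw [show a + (s7A xs k + t + 1) - (List.replicate a Symb.star).length
            = s7A xs k + t + 1 from by simp, List.getElem?_cons_succ]
        exact ih xs cs (by simpa using h) (by simpa using hk) (by simpa using ht)

lemma build_get_c (x : List ℕ) (cl : List Symb) (h : x.length = cl.length + 1)
    {k : ℕ} (hk : k < cl.length) :
    (build x cl)[s7A x k + x.getD k 0]? = cl[k]? := by
  induction k generalizing x cl with
  | zero =>
    match cl, hk with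
    | d :: cs, _ =>
      match x, h with
      | a :: xs, h =>
        simp only [build, s7A_zero, zero_add, List.getD_cons_zero]
        rw [List.getElem?_append_right (by simp)]
        simp
  | succ k ih =>
    match cl, hk with
    | d :: cs, hk =>
      match x, h with
      | a :: xs, h =>
        simp only [build, s7A_cons, List.getD_cons_succ]
        rw [show a + 1 + s7A xs k + xs.getD k 0 = a + (s7A xs k + xs.getD k 0 + 1) from by omega,
          List.getElem?_append_right (by simp)]
        rw [show a + (s7A xs k + xs.getD k 0 + 1) - (List.replicate a Symb.star).length
            = s7A xs k + xs.getD k 0 + 1 from by simp, List.getElem?_cons_succ,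
          List.getElem?_cons_succ]
        exact ih xs cs (by simpa using h) (by simpa using hk)

lemma s7top_mono (x : List ℕ) {k j : ℕ} (h : k ≤ j) (hj : j < x.length) :
    s7A x k + x.getD k 0 ≤ s7A x j + x.getD j 0 := by
  rcases Nat.lt_or_ge k j with h' | h'
  · have := s7A_block_lt x (show k < x.length by omega) h'
    omega
  · have : k = j := by omega
    subst this; rfl

/-- the block index of a vertex -/
def s7blk (x : List ℕ) (r v : ℕ) : ℕ := Nat.findGreatest (fun k => s7A x k ≤ v) r

lemma s7blk_le (x : List ℕ) (r v : ℕ) : s7blk x r v ≤ r := Nat.findGreatest_le r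

lemma s7A_blk_le (x : List ℕ) (r v : ℕ) : s7A x (s7blk x r v) ≤ v := by
  have h0 : s7A x 0 ≤ v := by simp [s7A_zero]
  exact Nat.findGreatest_spec (P := fun k => s7A x k ≤ v) (Nat.zero_le r) h0

lemma s7blk_eq (x : List ℕ) {r v k : ℕ} (hr : r < x.length) (hk : k ≤ r)
    (h1 : s7A x k ≤ v) (h2 : v ≤ s7A x k + x.getD k 0) : s7blk x r v = k := by
  refine le_antisymm ?_ (Nat.le_findGreatest hk h1)
  by_contra hlt
  push_neg at hlt
  have hble := s7blk_le x r v
  have hspec := s7A_blk_le x r v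
  have := s7A_succ x k (by omega)
  have := s7A_mono x (show k + 1 ≤ s7blk x r v by omega)
  omega

lemma s7blk_top (x : List ℕ) {r v : ℕ} (hr : r < x.length)
    (hv : v ≤ s7A x r + x.getD r 0) :
    v ≤ s7A x (s7blk x r v) + x.getD (s7blk x r v) 0 := by
  set k := s7blk x r v with hkdef
  rcases Nat.lt_or_ge k r with h' | h'
  · have := Nat.findGreatest_is_greatest (show s7blk x r v < k + 1 by omega)
      (show k + 1 ≤ r by omega)
    have := s7A_succ x k (by omega)
    simp only [← hkdef] at *
    omega
  · have : k = r := by have := s7blk_le x r v; omega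
    rw [this]; exact hv

/-- every position of `build x cl` is a star or a block boundary -/
lemma build_decomp (x : List ℕ) (cl : List Symb) (h : x.length = cl.length + 1)
    {v : ℕ} (hv : v < (build x cl).length) :
    (build x cl)[v]? = some Symb.star ∨ ∃ j < cl.length, v = s7A x j + x.getD j 0 := by
  set r := cl.length with hr
  have hrx : r < x.length := by omega
  have htop : s7A x r + x.getD r 0 = (build x cl).length := by
    rw [build_top x cl h, build_length x cl h]
  set k := s7blk x r v with hkdef
  have hk : k ≤ r := s7blk_le x r v
  have h1 : s7A x k ≤ v := s7A_blk_le x r v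
  have h2 : v ≤ s7A x k + x.getD k 0 := s7blk_top x hrx (by omega)
  rcases Nat.lt_or_ge v (s7A x k + x.getD k 0) with h3 | h3
  · left
    have : v = s7A x k + (v - s7A x k) := by omega
    rw [this]
    exact build_get_star x cl h hk (by omega)
  · have hveq : v = s7A x k + x.getD k 0 := by omega
    have hkr : k < r := by
      rcases Nat.lt_or_ge k r with h' | h'
      · exact h'
      · exfalso; have : k = r := by omega
        rw [this] at hveq; omega
    exact Or.inr ⟨k, hkr, hveq⟩

lemma arc_near {W : List Symb} {i j : ℕ} (h : pathArc W i j) :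
    i ≤ W.length ∧ j ≤ W.length ∧ (i = j ∨ j = i + 1 ∨ i = j + 1) := by
  obtain ⟨h1, h2, h3⟩ := h
  refine ⟨h1, h2, ?_⟩
  rcases h3 with h | ⟨h, _⟩ | ⟨h, _⟩ <;> omega

lemma pathArc_refl {W : List Symb} {v : ℕ} (h : v ≤ W.length) : pathArc W v v :=
  ⟨h, h, Or.inl rfl⟩

lemma hom_le {X Y : List Symb} {f : ℕ → ℕ}
    (harc : ∀ i j, pathArc X i j → pathArc Y (f i) (f j)) {v : ℕ} (hv : v ≤ X.length) :
    f v ≤ Y.length := (harc v v (pathArc_refl hv)).1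

lemma hom_step {X Y : List Symb} {f : ℕ → ℕ}
    (harc : ∀ i j, pathArc X i j → pathArc Y (f i) (f j)) {v : ℕ} (hv : v < X.length) :
    f (v+1) ≤ f v + 1 ∧ f v ≤ f (v+1) + 1 := by
  have hs : X[v]? = some X[v] := List.getElem?_eq_getElem hv
  have harc' : pathArc X v (v+1) ∨ pathArc X (v+1) v := by
    cases hXv : X[v] with
    | plus => exact Or.inl ⟨by omega, by omega, Or.inr (Or.inl ⟨rfl, Or.inl (by rw [hs, hXv])⟩)⟩
    | minus => exact Or.inr ⟨by omega, by omega, Or.inr (Or.inr ⟨rfl, Or.inl (by rw [hs, hXv])⟩)⟩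
    | star => exact Or.inl ⟨by omega, by omega, Or.inr (Or.inl ⟨rfl, Or.inr (by rw [hs, hXv])⟩)⟩
  rcases harc' with h | h
  · have := arc_near (harc _ _ h); omega
  · have := arc_near (harc _ _ h); omega

lemma hom_star {X Y : List Symb} {f : ℕ → ℕ}
    (harc : ∀ i j, pathArc X i j → pathArc Y (f i) (f j)) {v : ℕ} (hv : v < X.length)
    (hst : X[v]? = some Symb.star) :
    (f (v+1) = f v + 1 → Y[f v]? = some Symb.star) ∧
    (f v = f (v+1) + 1 → Y[f (v+1)]? = some Symb.star) := by
  have hfwd := harc v (v+1) ⟨by omega, by omega, Or.inr (Or.inl ⟨rfl, Or.inr hst⟩)⟩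
  have hbwd := harc (v+1) v ⟨by omega, by omega, Or.inr (Or.inr ⟨rfl, Or.inr hst⟩)⟩
  obtain ⟨-, -, h1⟩ := hfwd
  obtain ⟨-, -, h2⟩ := hbwd
  constructor
  · intro hup
    have ha : Y[f v]? = some Symb.plus ∨ Y[f v]? = some Symb.star := by
      rcases h1 with h | ⟨h, hs⟩ | ⟨h, _⟩
      · omega
      · exact hs
      · omega
    have hb : Y[f v]? = some Symb.minus ∨ Y[f v]? = some Symb.star := by
      rcases h2 with h | ⟨h, _⟩ | ⟨h, hs⟩
      · omega
      · omega
      · exact hs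
    rcases ha with ha | ha
    · rcases hb with hb | hb
      · rw [ha] at hb; exact absurd hb (by decide)
      · exact hb
    · exact ha
  · intro hdn
    have ha : Y[f (v+1)]? = some Symb.minus ∨ Y[f (v+1)]? = some Symb.star := by
      rcases h1 with h | ⟨h, _⟩ | ⟨h, hs⟩
      · omega
      · omega
      · exact hs
    have hb : Y[f (v+1)]? = some Symb.plus ∨ Y[f (v+1)]? = some Symb.star := by
      rcases h2 with h | ⟨h, hs⟩ | ⟨h, _⟩
      · omega
      · exact hs
      · omega
    rcases ha with ha | ha
    · rcases hb with hb | hb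
      · rw [ha] at hb; exact absurd hb (by decide)
      · exact hb
    · exact ha

section Invariants

variable {x y : List ℕ} {cl : List Symb} {f : ℕ → ℕ}

lemma walk_le {X Y : List Symb} (harc : ∀ i j, pathArc X i j → pathArc Y (f i) (f j)) :
    ∀ t a, a + t ≤ X.length → f (a + t) ≤ f a + t := by
  intro t
  induction t with
  | zero => intro a _; simp
  | succ t ih =>
    intro a ha
    have h1 := (hom_step harc (show a + t < X.length by omega)).1
    have h2 := ih a (by omega)
    calc f (a + (t+1)) = f ((a + t) + 1) := by ring_nf
      _ ≤ f (a + t) + 1 := h1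
      _ ≤ f a + t + 1 := by omega

lemma invU (hc : ∀ s ∈ cl, s ≠ Symb.star)
    (hx : x.length = cl.length + 1) (hy : y.length = cl.length + 1)
    (harc : ∀ i j, pathArc (build x cl) i j → pathArc (build y cl) (f i) (f j))
    (hf0 : f 0 = 0) :
    ∀ v, ∀ k ≤ cl.length, v ≤ s7A x k + x.getD k 0 → f v ≤ s7A y k + y.getD k 0 := by
  intro v
  induction v with
  | zero => intro k hk _; rw [hf0]; exact Nat.zero_le _
  | succ v ih =>
    intro k hk hv
    have htopX : s7A x cl.length + x.getD cl.length 0 = (build x cl).length := by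
      rw [build_top x cl hx, build_length x cl hx]
    have htopY : s7A y cl.length + y.getD cl.length 0 = (build y cl).length := by
      rw [build_top y cl hy, build_length y cl hy]
    have hvX : v < (build x cl).length := by
      have h1 : s7A x k + x.getD k 0 ≤ s7A x cl.length + x.getD cl.length 0 :=
        s7top_mono x hk (by omega)
      omega
    have hstep := hom_step harc hvX
    have hfY : f (v+1) ≤ (build y cl).length := hom_le harc (show v+1 ≤ _ by omega)
    rcases build_decomp x cl hx hvX with hstar | ⟨j, hj, hvj⟩
    · have hIH := ih k hk (by omega)
      by_contra hgt
      push_neg at hgt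
      have hfv : f v = s7A y k + y.getD k 0 := by omega
      have hY := (hom_star harc hvX hstar).1 (by omega)
      rcases Nat.lt_or_ge k cl.length with hkr | hkr
      · rw [hfv, build_get_c y cl hy hkr, List.getElem?_eq_getElem hkr] at hY
        exact absurd (by injection hY) (hc _ (List.getElem_mem _))
      · have hkr' : k = cl.length := by omega
        rw [hkr'] at hgt; omega
    · have hjk : j < k := by
        by_contra hle
        push_neg at hle
        have := s7top_mono x hle (by omega)
        omega
      have hIHj := ih j (by omega) (le_of_eq hvj)
      have h1 := s7A_succ y j (by omega)
      have h2 := s7A_mono y (show j+1 ≤ k by omega)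
      omega

lemma invL (hc : ∀ s ∈ cl, s ≠ Symb.star)
    (hx : x.length = cl.length + 1) (hy : y.length = cl.length + 1)
    (harc : ∀ i j, pathArc (build x cl) i j → pathArc (build y cl) (f i) (f j))
    (hfN : f (build x cl).length = (build y cl).length) :
    ∀ d v, v + d = (build x cl).length → ∀ k ≤ cl.length, s7A x k ≤ v → s7A y k ≤ f v := by
  have htopY : s7A y cl.length + y.getD cl.length 0 = (build y cl).length := by
    rw [build_top y cl hy, build_length y cl hy]
  intro d
  induction d with
  | zero =>
    intro v hv k hk _
    have hveq : v = (build x cl).length := by omega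
    rw [hveq, hfN]
    have := s7A_mono y hk
    omega
  | succ d ih =>
    intro v hvd k hk hAk
    have hvX : v < (build x cl).length := by omega
    have hstep := hom_step harc hvX
    have hnext := ih (v+1) (by omega)
    rcases build_decomp x cl hx hvX with hstar | ⟨j, hj, hvj⟩
    · have h1 : s7A y k ≤ f (v+1) := hnext k hk (by omega)
      by_contra hlt
      push_neg at hlt
      rcases k with _ | m
      · rw [s7A_zero] at hlt; omega
      · have hs := s7A_succ y m (by omega)
        have hup : f (v+1) = f v + 1 := by omega
        have hY := (hom_star harc hvX hstar).1 hup
        have hfv : f v = s7A y m + y.getD m 0 := by omega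
        rw [hfv, build_get_c y cl hy (show m < cl.length by omega),
          List.getElem?_eq_getElem (show m < cl.length by omega)] at hY
        exact absurd (by injection hY) (hc _ (List.getElem_mem _))
    · have hkj : k ≤ j := by
        by_contra hgt
        push_neg at hgt
        have h2 := s7A_mono x (show j+1 ≤ k by omega)
        have h3 := s7A_succ x j (by omega)
        omega
      have h1 := hnext (j+1) (by omega) (by rw [s7A_succ x j (by omega)]; omega)
      have h2 := s7A_succ y j (by omega)
      have h3 := s7A_mono y hkj
      omega

lemma dir_mp (hc : ∀ s ∈ cl, s ≠ Symb.star)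
    (hx : x.length = cl.length + 1) (hy : y.length = cl.length + 1)
    (hf : EPHom (build x cl) (build y cl) f) :
    ∀ k ≤ cl.length, y.getD k 0 ≤ x.getD k 0 := by
  obtain ⟨hf0, hfN, harc, -⟩ := hf
  intro k hk
  have htopX : s7A x cl.length + x.getD cl.length 0 = (build x cl).length := by
    rw [build_top x cl hx, build_length x cl hx]
  have htopY : s7A y cl.length + y.getD cl.length 0 = (build y cl).length := by
    rw [build_top y cl hy, build_length y cl hy]
  have hU := invU hc hx hy harc hf0
  have hL : ∀ v ≤ (build x cl).length, ∀ k ≤ cl.length, s7A x k ≤ v → s7A y k ≤ f v :=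
    fun v hv => invL hc hx hy harc hfN ((build x cl).length - v) v (by omega)
  have hAkX : s7A x k + x.getD k 0 ≤ (build x cl).length := by
    have := s7top_mono x hk (by omega); omega
  have hstart_le : f (s7A x k) ≤ s7A y k := by
    rcases k with _ | m
    · rw [s7A_zero, hf0, s7A_zero]
    · have h1 := hU (s7A x m + x.getD m 0) m (by omega) le_rfl
      have hsx := s7A_succ x m (by omega)
      have hsy := s7A_succ y m (by omega)
      have h2 := (hom_step harc (show s7A x m + x.getD m 0 < (build x cl).length by
        have := s7top_mono x (show m ≤ cl.length by omega) (show cl.length < x.length by omega)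
        omega)).1
      rw [hsx]
      omega
  have hend_ge : s7A y k + y.getD k 0 ≤ f (s7A x k + x.getD k 0) := by
    rcases Nat.lt_or_ge k cl.length with hkr | hkr
    · have hsx := s7A_succ x k (by omega)
      have hsy := s7A_succ y k (by omega)
      have hblt := s7A_block_lt x (show k < x.length by omega) hkr
      have h1 := hL (s7A x (k+1)) (by omega) (k+1) (by omega) le_rfl
      have h3 := (hom_step harc (show s7A x k + x.getD k 0 < (build x cl).length by omega)).1
      rw [hsx] at h1
      omega
    · have hkr' : k = cl.length := by omega
      subst hkr'
      rw [htopX, hfN]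
      omega
  have hwalk := walk_le harc (x.getD k 0) (s7A x k) (by omega)
  omega

end Invariants

lemma dir_mpr {x y : List ℕ} {cl : List Symb} (hc : ∀ s ∈ cl, s ≠ Symb.star)
    (hx : x.length = cl.length + 1) (hy : y.length = cl.length + 1)
    (hyx : ∀ k, k ≤ cl.length → y.getD k 0 ≤ x.getD k 0) :
    wle (build y cl) (build x cl) := by
  set r := cl.length with hr
  have hrx : r < x.length := by omega
  have hry : r < y.length := by omega
  have htopX : s7A x r + x.getD r 0 = (build x cl).length := by
    rw [build_top x cl hx, build_length x cl hx]
  have htopY : s7A y r + y.getD r 0 = (build y cl).length := by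
    rw [build_top y cl hy, build_length y cl hy]
  set f : ℕ → ℕ :=
    fun v => s7A y (s7blk x r v) + min (v - s7A x (s7blk x r v)) (y.getD (s7blk x r v) 0)
    with hfdef
  have hfval : ∀ k t, k ≤ r → t ≤ x.getD k 0 →
      f (s7A x k + t) = s7A y k + min t (y.getD k 0) := by
    intro k t hk ht
    have hblk : s7blk x r (s7A x k + t) = k := s7blk_eq x hrx hk (by omega) (by omega)
    simp only [hfdef, hblk, Nat.add_sub_cancel_left]
  have hfle : ∀ v, v ≤ (build x cl).length → f v ≤ (build y cl).length := by
    intro v hv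
    have hk := s7blk_le x r v
    have h1 := s7top_mono y hk hry
    have hmin := Nat.min_le_right (v - s7A x (s7blk x r v)) (y.getD (s7blk x r v) 0)
    simp only [hfdef]
    omega
  refine ⟨f, ?_, ?_, ?_, ?_⟩
  · -- f 0 = 0
    have h0 := hfval 0 0 (Nat.zero_le r) (Nat.zero_le _)
    rw [s7A_zero] at h0
    simpa [s7A_zero] using h0
  · -- f |X| = |Y|
    have h1 := hfval r (x.getD r 0) le_rfl le_rfl
    rw [htopX] at h1
    rw [h1, min_eq_right (hyx r le_rfl), htopY]
  · -- arcs
    intro i j harc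
    obtain ⟨hi, hj, hd⟩ := harc
    rcases hd with heq | ⟨hji, hsym⟩ | ⟨hij, hsym⟩
    · subst heq
      exact pathArc_refl (hfle i hi)
    · subst hji
      have hiX : i < (build x cl).length := hj
      set k := s7blk x r i with hkdef
      have hk : k ≤ r := s7blk_le x r i
      have h1 : s7A x k ≤ i := s7A_blk_le x r i
      have h2 : i ≤ s7A x k + x.getD k 0 := s7blk_top x hrx (by omega)
      set t := i - s7A x k with htdef
      have hieq : i = s7A x k + t := by omega
      rcases Nat.lt_or_ge i (s7A x k + x.getD k 0) with hin | hbd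
      · -- interior of a star block
        have hfi : f i = s7A y k + min t (y.getD k 0) := by
          rw [hieq]; exact hfval k t hk (by omega)
        have hfj : f (i+1) = s7A y k + min (t+1) (y.getD k 0) := by
          rw [hieq, show s7A x k + t + 1 = s7A x k + (t+1) from rfl]
          exact hfval k (t+1) hk (by omega)
        rcases Nat.lt_or_ge t (y.getD k 0) with hty | hty
        · have hstar : (build y cl)[s7A y k + t]? = some Symb.star :=
            build_get_star y cl hy hk hty
          have hfieq : f i = s7A y k + t := by rw [hfi, min_eq_left (by omega)]
          refine ⟨hfle i hi, hfle (i+1) hj, Or.inr (Or.inl ⟨?_, Or.inr ?_⟩)⟩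
          · rw [hfi, hfj, min_eq_left (by omega), min_eq_left (by omega)]; omega
          · rw [hfieq]; exact hstar
        · have : f (i+1) = f i := by
            rw [hfi, hfj, min_eq_right (by omega), min_eq_right (by omega)]
          rw [this]
          exact pathArc_refl (hfle i hi)
      · -- at a block boundary: i = s7A x k + x_k
        have hieq' : i = s7A x k + x.getD k 0 := by omega
        have hkr : k < r := by
          rcases Nat.lt_or_ge k r with h' | h'
          · exact h'
          · exfalso
            have : k = r := by omega
            rw [this] at hieq'
            omega
        have hXi : (build x cl)[i]? = cl[k]? := by rw [hieq']; exact build_get_c x cl hx hkr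
        have hYb : (build y cl)[s7A y k + y.getD k 0]? = cl[k]? := build_get_c y cl hy hkr
        have hfi : f i = s7A y k + y.getD k 0 := by
          rw [hieq', hfval k (x.getD k 0) hk le_rfl, min_eq_right (hyx k hk)]
        have hfj : f (i+1) = s7A y k + y.getD k 0 + 1 := by
          have h3 := hfval (k+1) 0 (by omega) (Nat.zero_le _)
          simp only [Nat.add_zero, Nat.min_eq_left (Nat.zero_le _), Nat.zero_min] at h3
          rw [s7A_succ x k (by omega)] at h3
          rw [hieq', h3, s7A_succ y k (by omega)]
        refine ⟨hfle i hi, hfle (i+1) hj, Or.inr (Or.inl ⟨by omega, ?_⟩)⟩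
        rw [hfi, hYb, ← hXi]
        exact hsym
    · subst hij
      have hjX : j < (build x cl).length := hi
      set k := s7blk x r j with hkdef
      have hk : k ≤ r := s7blk_le x r j
      have h1 : s7A x k ≤ j := s7A_blk_le x r j
      have h2 : j ≤ s7A x k + x.getD k 0 := s7blk_top x hrx (by omega)
      set t := j - s7A x k with htdef
      have hjeq : j = s7A x k + t := by omega
      rcases Nat.lt_or_ge j (s7A x k + x.getD k 0) with hin | hbd
      · have hfjv : f j = s7A y k + min t (y.getD k 0) := by
          rw [hjeq]; exact hfval k t hk (by omega)
        have hfiv : f (j+1) = s7A y k + min (t+1) (y.getD k 0) := by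
          rw [hjeq, show s7A x k + t + 1 = s7A x k + (t+1) from rfl]
          exact hfval k (t+1) hk (by omega)
        rcases Nat.lt_or_ge t (y.getD k 0) with hty | hty
        · have hstar : (build y cl)[s7A y k + t]? = some Symb.star :=
            build_get_star y cl hy hk hty
          have hfjeq : f j = s7A y k + t := by rw [hfjv, min_eq_left (by omega)]
          refine ⟨hfle (j+1) hi, hfle j hj, Or.inr (Or.inr ⟨?_, Or.inr ?_⟩)⟩
          · rw [hfjv, hfiv, min_eq_left (by omega), min_eq_left (by omega)]; omega
          · rw [hfjeq]; exact hstar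
        · have : f (j+1) = f j := by
            rw [hfjv, hfiv, min_eq_right (by omega), min_eq_right (by omega)]
          rw [this]
          exact pathArc_refl (hfle j hj)
      · have hjeq' : j = s7A x k + x.getD k 0 := by omega
        have hkr : k < r := by
          rcases Nat.lt_or_ge k r with h' | h'
          · exact h'
          · exfalso
            have : k = r := by omega
            rw [this] at hjeq'
            omega
        have hXj : (build x cl)[j]? = cl[k]? := by rw [hjeq']; exact build_get_c x cl hx hkr
        have hYb : (build y cl)[s7A y k + y.getD k 0]? = cl[k]? := build_get_c y cl hy hkr
        have hfjv : f j = s7A y k + y.getD k 0 := by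
          rw [hjeq', hfval k (x.getD k 0) hk le_rfl, min_eq_right (hyx k hk)]
        have hfiv : f (j+1) = s7A y k + y.getD k 0 + 1 := by
          have h3 := hfval (k+1) 0 (by omega) (Nat.zero_le _)
          simp only [Nat.add_zero, Nat.min_eq_left (Nat.zero_le _), Nat.zero_min] at h3
          rw [s7A_succ x k (by omega)] at h3
          rw [hjeq', h3, s7A_succ y k (by omega)]
        refine ⟨hfle (j+1) hi, hfle j hj, Or.inr (Or.inr ⟨by omega, ?_⟩)⟩
        rw [hfjv, hYb, ← hXj]
        exact hsym
  · -- surjectivity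
    intro m hm
    set k := s7blk y r m with hkdef
    have hk : k ≤ r := s7blk_le y r m
    have h1 : s7A y k ≤ m := s7A_blk_le y r m
    have h2 : m ≤ s7A y k + y.getD k 0 := s7blk_top y hry (by omega)
    set t := m - s7A y k with htdef
    have htx : t ≤ x.getD k 0 := le_trans (by omega) (hyx k hk)
    refine ⟨s7A x k + t, ?_, ?_⟩
    · have := s7top_mono x hk hrx
      omega
    · rw [hfval k t hk htx, min_eq_left (by omega)]
      omega

/-- If `X` and `Y` have the same star-deletion `c₁⋯c_r`, writing
`X = *^{x₀} c₁ ⋯ c_r *^{x_r}` and `Y = *^{y₀} c₁ ⋯ c_r *^{y_r}`,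
then `X ≥ Y` iff `x_i ≥ y_i` for all `i`. -/
theorem stmt_7 (c : List Symb) (hc : ∀ s ∈ c, s ≠ Symb.star)
    (x y : List ℕ) (hx : x.length = c.length + 1) (hy : y.length = c.length + 1) :
    wle (build y c) (build x c) ↔ List.Forall₂ (fun a b => b ≤ a) x y := by
  constructor
  · rintro ⟨f, hf⟩
    have hpt := dir_mp hc hx hy hf
    rw [List.forall₂_iff_get]
    refine ⟨hx.trans hy.symm, ?_⟩
    intro i h1 h2
    have := hpt i (by omega)
    rwa [List.getD_eq_getElem x 0 h1, List.getD_eq_getElem y 0 h2] at this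
  · intro h
    obtain ⟨hlen, hget⟩ := List.forall₂_iff_get.mp h
    refine dir_mpr hc hx hy (fun k hk => ?_)
    have h1 : k < x.length := by omega
    have h2 : k < y.length := by omega
    have := hget k h1 h2
    rw [List.getD_eq_getElem x 0 h1, List.getD_eq_getElem y 0 h2]
    simpa using this
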